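/- arXiv:1705.08959 — 7 statements merged into one kernel-verified Lean document; each statement's English description precedes it below -/
import Mathlib

section
/- Let β and ξ3 be nonzero complex numbers. The linear map from 𝔥 to 𝔭 determined on basis vectors by X1 ↦ iβ·P0, X2 ↦ β·P1, X3 ↦ 2iξ3·M01 is an isomorphism of complex Lie algebras; in particular, the reduced algebra 𝔥 is isomorphic to the two-dimensional Poincaré Lie algebra 𝔭. -/
open Complex

namespace LinearMap

variable {R L L' ι : Type*} [CommRing R] [LieRing L] [LieAlgebra R L] [LieRing L'] [LieAlgebra R L']

theorem map_lie_of_basis (f : L →ₗ[R] L') (b : Module.Basis ι R L)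
    (h : ∀ i j, f ⁅b i, b j⁆ = ⁅f (b i), f (b j)⁆) (x y : L) :
    f ⁅x, y⁆ = ⁅f x, f y⁆ := by
  have hbil : (LieAlgebra.ad R L : L →ₗ[R] Module.End R L).compr₂ f =
      (LieAlgebra.ad R L' : L' →ₗ[R] Module.End R L').compl₁₂ f f :=
    b.ext fun i => b.ext fun j => by simpa using h i j
  simpa using congr($hbil x y)

theorem map_lie_of_basis_of_lt [LinearOrder ι] (f : L →ₗ[R] L') (b : Module.Basis ι R L)
    (h : ∀ i j, i < j → f ⁅b i, b j⁆ = ⁅f (b i), f (b j)⁆) (x y : L) :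
    f ⁅x, y⁆ = ⁅f x, f y⁆ := by
  refine f.map_lie_of_basis b (fun i j => ?_) x y
  rcases lt_trichotomy i j with hij | rfl | hji
  · exact h i j hij
  · simp only [lie_self, map_zero]
  · rw [← lie_skew, map_neg, h j i hji, lie_skew]

end LinearMap

/-- `bH` is the basis `X1, X2, X3` of `𝔥` and `bP` the basis `P0, P1, M01` of `𝔭`. -/
theorem reduced_algebra_iso_poincare2 (β ξ3 : ℂ) (hβ : β ≠ 0) (hξ3 : ξ3 ≠ 0)
    {H P : Type*} [LieRing H] [LieAlgebra ℂ H] [LieRing P] [LieAlgebra ℂ P]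
    (bH : Module.Basis (Fin 3) ℂ H) (bP : Module.Basis (Fin 3) ℂ P)
    (hH12 : ⁅bH 0, bH 1⁆ = 0)
    (hH13 : ⁅bH 0, bH 2⁆ = (-(2 * I * ξ3)) • bH 1)
    (hH23 : ⁅bH 1, bH 2⁆ = (2 * I * ξ3) • bH 0)
    (hP01 : ⁅bP 0, bP 1⁆ = 0)
    (hP0M : ⁅bP 0, bP 2⁆ = I • bP 1)
    (hP1M : ⁅bP 1, bP 2⁆ = I • bP 0) :
    ∃ e : H ≃ₗ⁅ℂ⁆ P,
      e (bH 0) = (I * β) • bP 0 ∧ e (bH 1) = β • bP 1 ∧ e (bH 2) = (2 * I * ξ3) • bP 2 := by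
  let w : Fin 3 → ℂˣ := ![.mk0 (I * β) (mul_ne_zero I_ne_zero hβ), .mk0 β hβ,
    .mk0 (2 * I * ξ3) (mul_ne_zero (mul_ne_zero two_ne_zero I_ne_zero) hξ3)]
  let e := bH.equiv (bP.unitsSMul w) (Equiv.refl _)
  have he (i : Fin 3) : e (bH i) = (w i : ℂ) • bP i := by
    rw [Module.Basis.equiv_apply, Module.Basis.unitsSMul_apply, Equiv.refl_apply, Units.smul_def]
  have hbracket (i j : Fin 3) (hij : i < j) : e ⁅bH i, bH j⁆ = ⁅e (bH i), e (bH j)⁆ := by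
    fin_cases i <;> fin_cases j <;> simp at hij <;>
      simp [he, w, hH12, hH13, hH23, hP01, hP0M, hP1M, smul_smul] <;> match_scalars
    · linear_combination (-2 * I * ξ3 * β) * I_sq
    · ring
  exact ⟨{ e with map_lie' := e.toLinearMap.map_lie_of_basis_of_lt bH hbracket _ _ },
    he 0, he 1, he 2⟩
end

section
/- The element O1 := ξ3·X0 − ξ0·X3 lies in the center of the universal enveloping algebra U(𝔤); that is, O1 commutes with every element of U(𝔤). -/
/-!
Since `ξ3 X0 − ξ0 X3` is a linear combination of `X0` and `X3`, it is the image of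
`w = ξ3 b0 − ξ0 b3 ∈ 𝔤`. The bracket relations give `[b1, w] = (−2iξ0ξ3 + 2iξ0ξ3) b2 = 0`, similarly
`[b2, w] = 0`, and `[b0, w] = [b3, w] = 0` because `[b0, b3] = 0`; so `w` lies in the centre of `𝔤`.
The image of a central element of `𝔤` commutes with the generators `ι x` of `U(𝔤)`, hence with all
of `U(𝔤)`.
-/

open Complex

/-- The canonical image of the basis vector `b μ` in the universal enveloping algebra. -/
noncomputable def Xgen {L : Type*} [LieRing L] [LieAlgebra ℂ L]
    (b : Module.Basis (Fin 4) ℂ L) (μ : Fin 4) : UniversalEnvelopingAlgebra ℂ L :=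
  UniversalEnvelopingAlgebra.ι ℂ (b μ)

theorem LieModule.mem_maxTrivSubmodule_of_basis {R L M ι : Type*} [CommRing R] [LieRing L]
    [LieAlgebra R L] [AddCommGroup M] [Module R M] [LieRingModule L M] [LieModule R L M]
    (b : Module.Basis ι R L) {m : M} (h : ∀ i, ⁅b i, m⁆ = 0) :
    m ∈ LieModule.maxTrivSubmodule R L M := by
  rw [LieModule.mem_maxTrivSubmodule]
  intro x
  induction b.mem_span x using Submodule.span_induction with
  | mem _ hx => obtain ⟨i, rfl⟩ := hx; exact h i
  | zero => exact zero_lie m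
  | add _ _ _ _ hx hy => rw [add_lie, hx, hy, add_zero]
  | smul r _ _ hx => rw [smul_lie, hx, smul_zero]

attribute [local instance 100] LieRing.ofAssociativeRing in
theorem UniversalEnvelopingAlgebra.commute_ι_of_mem_center {R L : Type*} [CommRing R] [LieRing L]
    [LieAlgebra R L] {w : L} (hw : w ∈ LieAlgebra.center R L)
    (u : UniversalEnvelopingAlgebra R L) : Commute (ι R w) u := by
  obtain ⟨t, rfl⟩ : ∃ t, mkAlgHom R L t = u := RingCon.mkₐ_surjective _ u
  induction t using TensorAlgebra.induction with
  | algebraMap r => rw [AlgHom.commutes]; exact Algebra.commute_algebraMap_right r _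
  | ι x =>
    have h : ⁅ι R x, ι R w⁆ = 0 := by
      rw [← LieHom.map_lie, (LieModule.mem_maxTrivSubmodule R L L w).mp hw x, map_zero]
    rw [Ring.lie_def, sub_eq_zero] at h
    rw [← ι_apply]
    exact h.symm
  | add a c ha hc => rw [map_add]; exact ha.add_right hc
  | mul a c ha hc => rw [map_mul]; exact ha.mul_right hc

theorem O1_central_general (ξ0 ξ3 : ℂ)
    {L : Type*} [LieRing L] [LieAlgebra ℂ L]
    (b : Module.Basis (Fin 4) ℂ L)
    (h10 : ⁅b 1, b 0⁆ = (-(2 * I * ξ0)) • b 2)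
    (h13 : ⁅b 1, b 3⁆ = (-(2 * I * ξ3)) • b 2)
    (h20 : ⁅b 2, b 0⁆ = (2 * I * ξ0) • b 1)
    (h23 : ⁅b 2, b 3⁆ = (2 * I * ξ3) • b 1)
    (h03 : ⁅b 0, b 3⁆ = 0) :
    ∀ u : UniversalEnvelopingAlgebra ℂ L,
      (ξ3 • Xgen b 0 - ξ0 • Xgen b 3) * u = u * (ξ3 • Xgen b 0 - ξ0 • Xgen b 3) := by
  have h30 : ⁅b 3, b 0⁆ = 0 := by rw [← lie_skew, h03, neg_zero]
  have hw : ξ3 • b 0 - ξ0 • b 3 ∈ LieAlgebra.center ℂ L := by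
    refine LieModule.mem_maxTrivSubmodule_of_basis b fun μ => ?_
    fin_cases μ <;> simp [lie_sub, lie_smul, h10, h13, h20, h23, h03, h30, smul_smul] <;> module
  have hX : ξ3 • Xgen b 0 - ξ0 • Xgen b 3 =
      UniversalEnvelopingAlgebra.ι ℂ (ξ3 • b 0 - ξ0 • b 3) := by
    simp only [Xgen, map_sub, map_smul]
  intro u
  rw [hX]
  exact UniversalEnvelopingAlgebra.commute_ι_of_mem_center hw u

/-- `O1 := ξ3·X0 − ξ0·X3` lies in the center of `U(𝔤)`. -/
theorem O1_central (ξ0 ξ3 : ℂ)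
    {L : Type*} [LieRing L] [LieAlgebra ℂ L]
    (b : Module.Basis (Fin 4) ℂ L)
    (h10 : ⁅b 1, b 0⁆ = (-(2 * I * ξ0)) • b 2)
    (h13 : ⁅b 1, b 3⁆ = (-(2 * I * ξ3)) • b 2)
    (h20 : ⁅b 2, b 0⁆ = (2 * I * ξ0) • b 1)
    (h23 : ⁅b 2, b 3⁆ = (2 * I * ξ3) • b 1)
    (h03 : ⁅b 0, b 3⁆ = 0)
    (h12 : ⁅b 1, b 2⁆ = 0) :
    ∀ u : UniversalEnvelopingAlgebra ℂ L,
      (ξ3 • Xgen b 0 - ξ0 • Xgen b 3) * u = u * (ξ3 • Xgen b 0 - ξ0 • Xgen b 3) :=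
  O1_central_general ξ0 ξ3 b h10 h13 h20 h23 h03
end

section
/- The element O2 := X1² + X2² lies in the center of the universal enveloping algebra U(𝔤); that is, O2 commutes with every element of U(𝔤). -/
/-! `X1² + X2²` is the invariant quadratic form of the rotations of the plane spanned by `X1`
and `X2`, and every basis vector acts on that plane by an infinitesimal rotation (`X0` and `X3`
with angles `2iξ0` and `2iξ3`, `X1` and `X2` trivially). Hence `X1² + X2²` commutes with every
generator of `U(𝔤)`, and so with all of `U(𝔤)`. -/

open Complex

theorem commute_sq_add_sq_of_rotation {R A : Type*} [CommRing R] [Ring A] [Algebra R A]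
    {x y z : A} (c : R) (hx : x * z - z * x = -(c • y)) (hy : y * z - z * y = c • x) :
    Commute (x ^ 2 + y ^ 2) z := by
  have expand : (x ^ 2 + y ^ 2) * z - z * (x ^ 2 + y ^ 2)
      = x * (x * z - z * x) + (x * z - z * x) * x
        + (y * (y * z - z * y) + (y * z - z * y) * y) := by noncomm_ring
  rw [hx, hy, mul_neg, neg_mul, mul_smul_comm, smul_mul_assoc, mul_smul_comm, smul_mul_assoc]
    at expand
  rw [Commute, SemiconjBy, ← sub_eq_zero, expand]
  abel

attribute [local instance 100] LieRing.ofAssociativeRing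

namespace UniversalEnvelopingAlgebra

variable {R L : Type*} [CommRing R] [LieRing L] [LieAlgebra R L]

theorem ι_lie (x y : L) : ι R ⁅x, y⁆ = ι R x * ι R y - ι R y * ι R x :=
  (ι R).map_lie x y

theorem adjoin_range_ι :
    Algebra.adjoin R (Set.range (ι R : L → UniversalEnvelopingAlgebra R L)) = ⊤ := by
  have hsurj : (mkAlgHom R L).range = ⊤ :=
    (AlgHom.range_eq_top _).mpr (RingCon.mkₐ_surjective (ringCon R L))
  rw [← hsurj, ← Algebra.map_top, ← TensorAlgebra.adjoin_range_ι, AlgHom.map_adjoin,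
    ← Set.range_comp]
  rfl

theorem commute_of_forall_commute_ι_basis {κ : Type*} (b : Module.Basis κ R L)
    {a : UniversalEnvelopingAlgebra R L} (h : ∀ i, Commute a (ι R (b i)))
    (u : UniversalEnvelopingAlgebra R L) : Commute a u := by
  let S := Subalgebra.centralizer R {a}
  have hb :
      Submodule.span R (Set.range b) ≤ S.toSubmodule.comap (ι R : L →ₗ⁅R⁆ _).toLinearMap :=
    Submodule.span_le.mpr <| by
      rintro _ ⟨i, rfl⟩
      exact (Subalgebra.mem_centralizer_iff R).mpr fun _ ha ↦ ha ▸ (h i).eq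
  have hι : Algebra.adjoin R (Set.range (ι R)) ≤ S := Algebra.adjoin_le <| by
    rintro _ ⟨x, rfl⟩
    exact hb (b.span_eq ▸ Submodule.mem_top : x ∈ Submodule.span R (Set.range b))
  have hu : u ∈ S := hι (adjoin_range_ι (R := R) (L := L) ▸ Algebra.mem_top)
  exact (Subalgebra.mem_centralizer_iff R).mp hu a rfl

end UniversalEnvelopingAlgebra

theorem O2_central_general (ξ0 ξ3 : ℂ)
    {L : Type*} [LieRing L] [LieAlgebra ℂ L]
    (b : Module.Basis (Fin 4) ℂ L)
    (h10 : ⁅b 1, b 0⁆ = (-(2 * I * ξ0)) • b 2)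
    (h13 : ⁅b 1, b 3⁆ = (-(2 * I * ξ3)) • b 2)
    (h20 : ⁅b 2, b 0⁆ = (2 * I * ξ0) • b 1)
    (h23 : ⁅b 2, b 3⁆ = (2 * I * ξ3) • b 1)
    (h12 : ⁅b 1, b 2⁆ = 0) :
    ∀ u : UniversalEnvelopingAlgebra ℂ L,
      (Xgen b 1 ^ 2 + Xgen b 2 ^ 2) * u = u * (Xgen b 1 ^ 2 + Xgen b 2 ^ 2) := by
  have rotation : ∀ μ, ∃ c : ℂ, ⁅b 1, b μ⁆ = -(c • b 2) ∧ ⁅b 2, b μ⁆ = c • b 1 := by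
    intro μ
    match μ with
    | 0 => exact ⟨2 * I * ξ0, by rw [h10, neg_smul], h20⟩
    | 1 => exact ⟨0, by simp, by rw [← lie_skew, h12]; simp⟩
    | 2 => exact ⟨0, by simp [h12], by simp⟩
    | 3 => exact ⟨2 * I * ξ3, by rw [h13, neg_smul], h23⟩
  intro u
  refine (UniversalEnvelopingAlgebra.commute_of_forall_commute_ι_basis b (fun μ ↦ ?_) u).eq
  obtain ⟨c, h1, h2⟩ := rotation μ
  refine commute_sq_add_sq_of_rotation c ?_ ?_ <;>
    simp only [Xgen, ← UniversalEnvelopingAlgebra.ι_lie, h1, h2, map_neg, map_smul]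

/-- `O2 := X1² + X2²` lies in the center of `U(𝔤)`. -/
theorem O2_central (ξ0 ξ3 : ℂ)
    {L : Type*} [LieRing L] [LieAlgebra ℂ L]
    (b : Module.Basis (Fin 4) ℂ L)
    (h10 : ⁅b 1, b 0⁆ = (-(2 * I * ξ0)) • b 2)
    (h13 : ⁅b 1, b 3⁆ = (-(2 * I * ξ3)) • b 2)
    (h20 : ⁅b 2, b 0⁆ = (2 * I * ξ0) • b 1)
    (h23 : ⁅b 2, b 3⁆ = (2 * I * ξ3) • b 1)
    (h03 : ⁅b 0, b 3⁆ = 0)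
    (h12 : ⁅b 1, b 2⁆ = 0) :
    ∀ u : UniversalEnvelopingAlgebra ℂ L,
      (Xgen b 1 ^ 2 + Xgen b 2 ^ 2) * u = u * (Xgen b 1 ^ 2 + Xgen b 2 ^ 2) :=
  O2_central_general ξ0 ξ3 b h10 h13 h20 h23 h12
end

section
/- In U(𝔤), with g01 := α·X1 + β·(X1·X3 + X3·X1), g02 := α·X2 + β·(X2·X3 + X3·X2), g11 := δ·X1², and g12 := δ·X1·X2, the following identity holds: g11·g02 − g01·g12 = 2iξ3·β·δ·X1·(4·X1² − 3·O2), where O2 := X1² + X2². -/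
/-!
Write `x, y, z` for the images of `X1, X2, X3` and `c = 2iξ3`, so that `[x, y] = 0`,
`[x, z] = -c y` and `[y, z] = c x`. The `α`-terms cancel by associativity, and moving `z`
to the right in `x² (yz + zy) - (xz + zx) xy` leaves `c (x³ - 3 x y²)`.
-/

open Complex

theorem UniversalEnvelopingAlgebra.ι_lie_s9 {R L : Type*} [CommRing R] [LieRing L]
    [LieAlgebra R L] (u v : L) : ι R ⁅u, v⁆ = ι R u * ι R v - ι R v * ι R u := by
  let _ := LieRing.ofAssociativeRing (A := UniversalEnvelopingAlgebra R L)
  rw [LieHom.map_lie, Ring.lie_def]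

section CommutatorRelations

variable {R A : Type*} [CommRing R] [Ring A] [Algebra R A] {c : R} {x y z : A}

theorem sq_mul_anticomm_sub_anticomm_mul (hxy : x * y = y * x)
    (hxz : x * z - z * x = -c • y) (hyz : y * z - z * y = c • x) :
    x ^ 2 * (y * z + z * y) - (x * z + z * x) * (x * y) = c • (x ^ 3 - 3 * (x * y ^ 2)) := by
  simp only [Algebra.smul_def, map_neg] at *
  have hcx : algebraMap R A c * x = x * algebraMap R A c := Algebra.commutes c x
  linear_combination (norm := noncomm_ring)
    (x * x) * hyz + 2 * x * hxz * y + hxz * x * y + algebraMap R A c * hxy * y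
      + 2 * hcx * y * y - x * hcx * x - hcx * x * x

theorem smul_sq_mul_sub_mul_smul_eq_of_commutators (α β δ : R) (hxy : x * y = y * x)
    (hxz : x * z - z * x = -c • y) (hyz : y * z - z * y = c • x) :
    (δ • x ^ 2) * (α • y + β • (y * z + z * y)) - (α • x + β • (x * z + z * x)) * (δ • (x * y))
      = (c * β * δ) • (x * (4 * x ^ 2 - 3 * (x ^ 2 + y ^ 2))) := by
  calc _ = (β * δ) • (x ^ 2 * (y * z + z * y) - (x * z + z * x) * (x * y)) := by
        simp only [smul_mul_smul_comm, mul_add, add_mul, smul_add, smul_sub, mul_assoc, pow_two]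
        module
    _ = _ := by
        rw [sq_mul_anticomm_sub_anticomm_mul hxy hxz hyz, smul_smul]
        congr 1
        · ring
        · noncomm_ring

end CommutatorRelations

theorem J4_identity_general (ξ3 α β δ : ℂ)
    {L : Type*} [LieRing L] [LieAlgebra ℂ L]
    (b : Module.Basis (Fin 4) ℂ L)
    (h13 : ⁅b 1, b 3⁆ = (-(2 * I * ξ3)) • b 2)
    (h23 : ⁅b 2, b 3⁆ = (2 * I * ξ3) • b 1)
    (h12 : ⁅b 1, b 2⁆ = 0) :
    (δ • Xgen b 1 ^ 2) * (α • Xgen b 2 + β • (Xgen b 2 * Xgen b 3 + Xgen b 3 * Xgen b 2))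
      - (α • Xgen b 1 + β • (Xgen b 1 * Xgen b 3 + Xgen b 3 * Xgen b 1)) * (δ • (Xgen b 1 * Xgen b 2))
      = (2 * I * ξ3 * β * δ) •
          (Xgen b 1 * (4 * Xgen b 1 ^ 2 - 3 * (Xgen b 1 ^ 2 + Xgen b 2 ^ 2))) := by
  have commutator (μ ν : Fin 4) :
      Xgen b μ * Xgen b ν - Xgen b ν * Xgen b μ = UniversalEnvelopingAlgebra.ι ℂ ⁅b μ, b ν⁆ :=
    (UniversalEnvelopingAlgebra.ι_lie_s9 _ _).symm
  apply smul_sq_mul_sub_mul_smul_eq_of_commutators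
  · rw [← sub_eq_zero, commutator, h12, map_zero]
  · rw [commutator, h13, map_smul, Xgen]
  · rw [commutator, h23, map_smul, Xgen]

/-- `g11·g02 − g01·g12 = 2iξ3·β·δ·X1·(4X1² − 3O2)` in `U(𝔤)`. -/
theorem J4_identity (ξ0 ξ3 α β δ : ℂ)
    {L : Type*} [LieRing L] [LieAlgebra ℂ L]
    (b : Module.Basis (Fin 4) ℂ L)
    (h10 : ⁅b 1, b 0⁆ = (-(2 * I * ξ0)) • b 2)
    (h13 : ⁅b 1, b 3⁆ = (-(2 * I * ξ3)) • b 2)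
    (h20 : ⁅b 2, b 0⁆ = (2 * I * ξ0) • b 1)
    (h23 : ⁅b 2, b 3⁆ = (2 * I * ξ3) • b 1)
    (h03 : ⁅b 0, b 3⁆ = 0)
    (h12 : ⁅b 1, b 2⁆ = 0) :
    (δ • Xgen b 1 ^ 2) * (α • Xgen b 2 + β • (Xgen b 2 * Xgen b 3 + Xgen b 3 * Xgen b 2))
      - (α • Xgen b 1 + β • (Xgen b 1 * Xgen b 3 + Xgen b 3 * Xgen b 1)) * (δ • (Xgen b 1 * Xgen b 2))
      = (2 * I * ξ3 * β * δ) •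
          (Xgen b 1 * (4 * Xgen b 1 ^ 2 - 3 * (Xgen b 1 ^ 2 + Xgen b 2 ^ 2))) :=
  J4_identity_general ξ3 α β δ b h13 h23 h12
end

section
/- In U(𝔤), with g01 := α·X1 + β·(X1·X3 + X3·X1), g02 := α·X2 + β·(X2·X3 + X3·X2), g21 := δ·X1·X2, and g22 := δ·X2², the following identity holds: g01·g22 − g21·g02 = 2iξ3·β·δ·X2·(O2 − 4·X1²), where O2 := X1² + X2². -/
open Complex

theorem anticommutator_mul_sq_sub_mul_anticommutator {A : Type*} [Ring A] (a b z : A) :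
    (a * z + z * a) * b ^ 2 - a * b * (b * z + z * b)
      = -(⁅a, z⁆ * b ^ 2 + 2 * a * ⁅b, z⁆ * b + a * b * ⁅b, z⁆) := by
  simp only [Ring.lie_def]
  noncomm_ring

theorem anticommutator_mul_sq_sub_mul_anticommutator_of_lie_eq_smul
    {R A : Type*} [CommRing R] [Ring A] [Algebra R A] (c : R) {x y z : A}
    (hxy : Commute x y) (hxz : ⁅x, z⁆ = (-c) • y) (hyz : ⁅y, z⁆ = c • x) :
    (x * z + z * x) * y ^ 2 - x * y * (y * z + z * y)
      = c • (y * ((x ^ 2 + y ^ 2) - 4 * x ^ 2)) := by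
  have hxyx : x * y * x = y * x ^ 2 := by rw [hxy.eq, mul_assoc, sq]
  rw [anticommutator_mul_sq_sub_mul_anticommutator, hxz, hyz]
  simp only [mul_smul_comm, smul_mul_assoc, hxyx, mul_assoc, ← sq]
  rw [(hxy.pow_left 2).eq, mul_sub, mul_add, ← (Commute.ofNat_left 4 y).left_comm]
  simp only [Algebra.smul_def, map_neg]
  noncomm_ring

theorem UniversalEnvelopingAlgebra.lie_ι {R L : Type*} [CommRing R] [LieRing L]
    [LieAlgebra R L] (u v : L) :
    ⁅ι R u, ι R v⁆ = ι R ⁅u, v⁆ := by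
  -- `ι` is a Lie hom for the commutator Lie ring structure, which is not a global instance.
  let := LieRing.ofAssociativeRing (A := UniversalEnvelopingAlgebra R L)
  exact ((ι R).map_lie u v).symm

theorem lie_Xgen {L : Type*} [LieRing L] [LieAlgebra ℂ L]
    (b : Module.Basis (Fin 4) ℂ L) (μ ν : Fin 4) :
    ⁅Xgen b μ, Xgen b ν⁆ = UniversalEnvelopingAlgebra.ι ℂ ⁅b μ, b ν⁆ :=
  UniversalEnvelopingAlgebra.lie_ι _ _

theorem J5_identity_general (ξ3 α β δ : ℂ)
    {L : Type*} [LieRing L] [LieAlgebra ℂ L]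
    (b : Module.Basis (Fin 4) ℂ L)
    (h13 : ⁅b 1, b 3⁆ = (-(2 * I * ξ3)) • b 2)
    (h23 : ⁅b 2, b 3⁆ = (2 * I * ξ3) • b 1)
    (h12 : ⁅b 1, b 2⁆ = 0) :
    (α • Xgen b 1 + β • (Xgen b 1 * Xgen b 3 + Xgen b 3 * Xgen b 1)) * (δ • Xgen b 2 ^ 2)
      - (δ • (Xgen b 1 * Xgen b 2)) * (α • Xgen b 2 + β • (Xgen b 2 * Xgen b 3 + Xgen b 3 * Xgen b 2))
      = (2 * I * ξ3 * β * δ) •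
          (Xgen b 2 * ((Xgen b 1 ^ 2 + Xgen b 2 ^ 2) - 4 * Xgen b 1 ^ 2)) := by
  have hxy : Commute (Xgen b 1) (Xgen b 2) := by
    rw [commute_iff_lie_eq, lie_Xgen, h12, map_zero]
  have hxz : ⁅Xgen b 1, Xgen b 3⁆ = (-(2 * I * ξ3)) • Xgen b 2 := by
    rw [lie_Xgen, h13, map_smul, Xgen]
  have hyz : ⁅Xgen b 2, Xgen b 3⁆ = (2 * I * ξ3) • Xgen b 1 := by
    rw [lie_Xgen, h23, map_smul, Xgen]
  set x := Xgen b 1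
  set y := Xgen b 2
  set z := Xgen b 3
  calc (α • x + β • (x * z + z * x)) * (δ • y ^ 2) - (δ • (x * y)) * (α • y + β • (y * z + z * y))
      = (β * δ) • ((x * z + z * x) * y ^ 2 - x * y * (y * z + z * y)) := by
        simp only [add_mul, mul_add, smul_mul_assoc, mul_smul_comm, smul_smul, mul_assoc, sq]
        module
    _ = (2 * I * ξ3 * β * δ) • (y * ((x ^ 2 + y ^ 2) - 4 * x ^ 2)) := by
        rw [anticommutator_mul_sq_sub_mul_anticommutator_of_lie_eq_smul _ hxy hxz hyz, smul_smul,
          mul_comm (β * δ), ← mul_assoc]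

/-- `g01·g22 − g21·g02 = 2iξ3·β·δ·X2·(O2 − 4X1²)` in `U(𝔤)`. -/
theorem J5_identity (ξ0 ξ3 α β δ : ℂ)
    {L : Type*} [LieRing L] [LieAlgebra ℂ L]
    (b : Module.Basis (Fin 4) ℂ L)
    (h10 : ⁅b 1, b 0⁆ = (-(2 * I * ξ0)) • b 2)
    (h13 : ⁅b 1, b 3⁆ = (-(2 * I * ξ3)) • b 2)
    (h20 : ⁅b 2, b 0⁆ = (2 * I * ξ0) • b 1)
    (h23 : ⁅b 2, b 3⁆ = (2 * I * ξ3) • b 1)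
    (h03 : ⁅b 0, b 3⁆ = 0)
    (h12 : ⁅b 1, b 2⁆ = 0) :
    (α • Xgen b 1 + β • (Xgen b 1 * Xgen b 3 + Xgen b 3 * Xgen b 1)) * (δ • Xgen b 2 ^ 2)
      - (δ • (Xgen b 1 * Xgen b 2)) * (α • Xgen b 2 + β • (Xgen b 2 * Xgen b 3 + Xgen b 3 * Xgen b 2))
      = (2 * I * ξ3 * β * δ) •
          (Xgen b 2 * ((Xgen b 1 ^ 2 + Xgen b 2 ^ 2) - 4 * Xgen b 1 ^ 2)) :=
  J5_identity_general ξ3 α β δ b h13 h23 h12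
end

section
/- In U(𝔤), with g01 := α·X1 + β·(X1·X3 + X3·X1) and g02 := α·X2 + β·(X2·X3 + X3·X2), the commutator identity [g01, g02] = −4iξ3·β·O2·(α + 2β·X3) holds, where O2 := X1² + X2². -/
open Complex

theorem UniversalEnvelopingAlgebra.ι_mul_sub_ι_mul {R L : Type*} [CommRing R] [LieRing L]
    [LieAlgebra R L] (x y : L) :
    ι R x * ι R y - ι R y * ι R x = ι R ⁅x, y⁆ := by
  let _ : LieRing (UniversalEnvelopingAlgebra R L) := LieRing.ofAssociativeRing
  rw [LieHom.map_lie, Ring.lie_def]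

theorem commutator_symmetrized_eq {R A : Type*} [CommRing R] [Ring A] [Algebra R A]
    (x y z : A) (s α β : R)
    (hxy : x * y - y * x = 0) (hxz : x * z - z * x = -(s • y)) (hyz : y * z - z * y = s • x) :
    (α • x + β • (x * z + z * x)) * (α • y + β • (y * z + z * y))
      - (α • y + β • (y * z + z * y)) * (α • x + β • (x * z + z * x))
      = (-(2 * s * β)) • ((x ^ 2 + y ^ 2) * (algebraMap R A α + (2 * β) • z)) := by
  have hyx : y * x = x * y := (sub_eq_zero.mp hxy).symm
  have hzx : z * x = x * z + s • y := by rw [← sub_eq_iff_eq_add', ← neg_sub, hxz, neg_neg]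
  have hzy : z * y = y * z - s • x := by rw [eq_sub_iff_add_eq', ← eq_sub_iff_add_eq, hyz]
  have hyx' (w : A) : y * (x * w) = x * (y * w) := by rw [← mul_assoc, hyx, mul_assoc]
  have hzx' (w : A) : z * (x * w) = x * (z * w) + s • (y * w) := by
    rw [← mul_assoc, hzx, add_mul, smul_mul_assoc, mul_assoc]
  have hzy' (w : A) : z * (y * w) = y * (z * w) - s • (x * w) := by
    rw [← mul_assoc, hzy, sub_mul, smul_mul_assoc, mul_assoc]
  -- Rewriting every monomial into the order `x, y, z` leaves an identity between
  -- linear combinations of ordered monomials.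
  rw [Algebra.algebraMap_eq_smul_one]
  simp only [mul_add, add_mul, mul_sub, sub_mul, smul_mul_assoc, mul_smul_comm, mul_assoc,
    pow_two, mul_one, hyx, hzx, hzy, hyx', hzx', hzy', smul_add, smul_sub, smul_smul]
  module

theorem g01_g02_commutator_general (ξ3 α β : ℂ)
    {L : Type*} [LieRing L] [LieAlgebra ℂ L]
    (b : Module.Basis (Fin 4) ℂ L)
    (h13 : ⁅b 1, b 3⁆ = (-(2 * I * ξ3)) • b 2)
    (h23 : ⁅b 2, b 3⁆ = (2 * I * ξ3) • b 1)
    (h12 : ⁅b 1, b 2⁆ = 0) :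
    (α • Xgen b 1 + β • (Xgen b 1 * Xgen b 3 + Xgen b 3 * Xgen b 1)) *
        (α • Xgen b 2 + β • (Xgen b 2 * Xgen b 3 + Xgen b 3 * Xgen b 2))
      - (α • Xgen b 2 + β • (Xgen b 2 * Xgen b 3 + Xgen b 3 * Xgen b 2)) *
        (α • Xgen b 1 + β • (Xgen b 1 * Xgen b 3 + Xgen b 3 * Xgen b 1))
      = (-(4 * I * ξ3 * β)) •
          ((Xgen b 1 ^ 2 + Xgen b 2 ^ 2) *
            (algebraMap ℂ (UniversalEnvelopingAlgebra ℂ L) α + (2 * β) • Xgen b 3)) := by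
  have hcomm (i j : Fin 4) : Xgen b i * Xgen b j - Xgen b j * Xgen b i
      = UniversalEnvelopingAlgebra.ι ℂ ⁅b i, b j⁆ :=
    UniversalEnvelopingAlgebra.ι_mul_sub_ι_mul _ _
  have h12' : Xgen b 1 * Xgen b 2 - Xgen b 2 * Xgen b 1 = 0 := by
    rw [hcomm, h12, map_zero]
  have h13' : Xgen b 1 * Xgen b 3 - Xgen b 3 * Xgen b 1 = -((2 * I * ξ3) • Xgen b 2) := by
    rw [hcomm, h13, map_smul, neg_smul]
    rfl
  have h23' : Xgen b 2 * Xgen b 3 - Xgen b 3 * Xgen b 2 = (2 * I * ξ3) • Xgen b 1 := by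
    rw [hcomm, h23, map_smul]
    rfl
  rw [commutator_symmetrized_eq _ _ _ _ α β h12' h13' h23']
  congr 1
  ring

/-- `[g01, g02] = −4iξ3·β·O2·(α + 2β·X3)` in `U(𝔤)`. -/
theorem g01_g02_commutator (ξ0 ξ3 α β : ℂ)
    {L : Type*} [LieRing L] [LieAlgebra ℂ L]
    (b : Module.Basis (Fin 4) ℂ L)
    (h10 : ⁅b 1, b 0⁆ = (-(2 * I * ξ0)) • b 2)
    (h13 : ⁅b 1, b 3⁆ = (-(2 * I * ξ3)) • b 2)
    (h20 : ⁅b 2, b 0⁆ = (2 * I * ξ0) • b 1)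
    (h23 : ⁅b 2, b 3⁆ = (2 * I * ξ3) • b 1)
    (h03 : ⁅b 0, b 3⁆ = 0)
    (h12 : ⁅b 1, b 2⁆ = 0) :
    (α • Xgen b 1 + β • (Xgen b 1 * Xgen b 3 + Xgen b 3 * Xgen b 1)) *
        (α • Xgen b 2 + β • (Xgen b 2 * Xgen b 3 + Xgen b 3 * Xgen b 2))
      - (α • Xgen b 2 + β • (Xgen b 2 * Xgen b 3 + Xgen b 3 * Xgen b 2)) *
        (α • Xgen b 1 + β • (Xgen b 1 * Xgen b 3 + Xgen b 3 * Xgen b 1))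
      = (-(4 * I * ξ3 * β)) •
          ((Xgen b 1 ^ 2 + Xgen b 2 ^ 2) *
            (algebraMap ℂ (UniversalEnvelopingAlgebra ℂ L) α + (2 * β) • Xgen b 3)) :=
  g01_g02_commutator_general ξ3 α β b h13 h23 h12
end

section
/- Assume ξ0 ≠ 0 and ξ3 ≠ 0, and let D be any derivation of the Lie algebra 𝔤 (a linear map with D[x,y] = [Dx,y] + [x,Dy]). Write D X_ν = Σ_σ N^σ_ν · X_σ with complex coefficients N^σ_ν. Then: N^0_1 = N^3_1 = N^0_2 = N^3_2 = 0; N^1_1 = N^2_2 and N^2_1 = −N^1_2; N^3_0 = −(ξ0/ξ3)·N^0_0 and N^3_3 = −(ξ0/ξ3)·N^0_3; and N^1_3 = (ξ3/ξ0)·N^1_0 and N^2_3 = (ξ3/ξ0)·N^2_0. -/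
/-!
In a basis, the derivation identity `D ⁅X ν, X μ⁆ = ⁅D X ν, X μ⁆ + ⁅X ν, D X μ⁆` becomes a system of
linear equations on the matrix `N`, with the structure constants as coefficients. For `𝔤` the
equations coming from the pairs `(1, 0)`, `(2, 0)`, `(1, 3)` and `(0, 3)` already give every stated
relation once the factors `2iξ0` and `2iξ3` are cancelled.
-/

open Complex

/-- `N` is the matrix (`D (b ν) = ∑ σ, N σ ν • b σ`) of a derivation of a Lie algebra whose structure
constants on the basis `b` are `C` (`⁅b i, b j⁆ = ∑ k, C i j k • b k`). -/
def IsDerivationMatrix {R ι : Type*} [CommRing R] [Fintype ι] (C : ι → ι → ι → R)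
    (N : ι → ι → R) : Prop :=
  ∀ ν μ ρ, ∑ k, C ν μ k * N ρ k = ∑ σ, N σ ν * C σ μ ρ + ∑ σ, N σ μ * C ν σ ρ

theorem Module.Basis.isDerivationMatrix {R L ι : Type*} [CommRing R] [LieRing L]
    [LieAlgebra R L] [Fintype ι] (b : Module.Basis ι R L) (C : ι → ι → ι → R)
    (hC : ∀ i j, ⁅b i, b j⁆ = ∑ k, C i j k • b k)
    (D : L →ₗ[R] L) (hD : ∀ x y : L, D ⁅x, y⁆ = ⁅D x, y⁆ + ⁅x, D y⁆)
    (N : ι → ι → R) (hN : ∀ ν, D (b ν) = ∑ σ, N σ ν • b σ) :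
    IsDerivationMatrix C N := by
  intro ν μ ρ
  have hC_repr : ∀ i j, b.repr ⁅b i, b j⁆ ρ = C i j ρ := by
    intro i j
    rw [hC, b.repr_sum_self]
  have hN_repr : ∀ k, b.repr (D (b k)) ρ = N ρ k := by
    intro k
    rw [hN, b.repr_sum_self]
  have h := congrArg (fun x => b.repr x ρ) (hD (b ν) (b μ))
  rw [hC ν μ, hN ν, hN μ] at h
  simpa only [map_sum, map_smul, map_add, sum_lie, lie_sum, smul_lie, lie_smul,
    Finsupp.coe_add, Finsupp.coe_finsetSum, Finsupp.smul_apply, Pi.add_apply,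
    Finset.sum_apply, smul_eq_mul, hC_repr, hN_repr] using h

/-- The structure constants of `𝔤`. -/
def gStructConst (ξ0 ξ3 : ℂ) : Fin 4 → Fin 4 → Fin 4 → ℂ
  | 1, 0, 2 => -(2 * I * ξ0)
  | 0, 1, 2 => 2 * I * ξ0
  | 1, 3, 2 => -(2 * I * ξ3)
  | 3, 1, 2 => 2 * I * ξ3
  | 2, 0, 1 => 2 * I * ξ0
  | 0, 2, 1 => -(2 * I * ξ0)
  | 2, 3, 1 => 2 * I * ξ3
  | 3, 2, 1 => -(2 * I * ξ3)
  | _, _, _ => 0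

theorem lie_basis_eq_gStructConst (ξ0 ξ3 : ℂ) {L : Type*} [LieRing L] [LieAlgebra ℂ L]
    (b : Module.Basis (Fin 4) ℂ L)
    (h10 : ⁅b 1, b 0⁆ = (-(2 * I * ξ0)) • b 2)
    (h13 : ⁅b 1, b 3⁆ = (-(2 * I * ξ3)) • b 2)
    (h20 : ⁅b 2, b 0⁆ = (2 * I * ξ0) • b 1)
    (h23 : ⁅b 2, b 3⁆ = (2 * I * ξ3) • b 1)
    (h03 : ⁅b 0, b 3⁆ = 0)
    (h12 : ⁅b 1, b 2⁆ = 0) (i j : Fin 4) :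
    ⁅b i, b j⁆ = ∑ k, gStructConst ξ0 ξ3 i j k • b k := by
  have skew : ∀ {x y z : L}, ⁅x, y⁆ = z → ⁅y, x⁆ = -z := fun h => by rw [← lie_skew, h]
  fin_cases i <;> fin_cases j <;>
    simp [Fin.sum_univ_four, gStructConst, h10, h13, h20, h23, h03, h12, skew h10, skew h13,
      skew h20, skew h23, skew h03, skew h12]

theorem IsDerivationMatrix.gStructConst_relations {ξ0 ξ3 : ℂ} (hξ0 : ξ0 ≠ 0)
    {N : Fin 4 → Fin 4 → ℂ} (hN : IsDerivationMatrix (gStructConst ξ0 ξ3) N) :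
    N 0 1 = 0 ∧ N 3 1 = 0 ∧ N 0 2 = 0 ∧ N 3 2 = 0 ∧
    N 1 1 = N 2 2 ∧ N 2 1 = -N 1 2 ∧
    ξ3 * N 3 0 = -(ξ0 * N 0 0) ∧ ξ3 * N 3 3 = -(ξ0 * N 0 3) ∧
    ξ0 * N 1 3 = ξ3 * N 1 0 ∧ ξ0 * N 2 3 = ξ3 * N 2 0 := by
  -- `eνμρ` is the `ρ`-th coordinate of the derivation identity on `⁅X ν, X μ⁆`.
  have e100 := hN 1 0 0
  have e101 := hN 1 0 1
  have e102 := hN 1 0 2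
  have e103 := hN 1 0 3
  have e200 := hN 2 0 0
  have e201 := hN 2 0 1
  have e203 := hN 2 0 3
  have e132 := hN 1 3 2
  have e031 := hN 0 3 1
  have e032 := hN 0 3 2
  simp only [gStructConst, Fin.isValue, Fin.sum_univ_four, zero_mul, add_zero, neg_mul, zero_add,
    mul_zero, Finset.sum_const_zero, neg_eq_zero, mul_eq_zero, OfNat.ofNat_ne_zero, I_ne_zero,
    or_self, false_or, mul_neg] at e100 e101 e102 e103 e200 e201 e203 e132 e031 e032
  have h2I : (2 * I : ℂ) ≠ 0 := mul_ne_zero two_ne_zero I_ne_zero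
  have hN11 : N 1 1 = N 2 2 :=
    mul_left_cancel₀ (mul_ne_zero h2I hξ0) (by linear_combination (e201 + e102) / 2)
  refine ⟨e200.resolve_left hξ0, e203.resolve_left hξ0, e100.resolve_left hξ0,
    e103.resolve_left hξ0, hN11, ?_, ?_, ?_, ?_, ?_⟩
  · exact mul_left_cancel₀ (mul_ne_zero h2I hξ0) (by linear_combination -e101)
  · exact mul_left_cancel₀ h2I (by linear_combination (e102 - e201) / 2)
  · exact mul_left_cancel₀ h2I (by linear_combination e132 - 2 * I * ξ3 * hN11)
  · exact mul_left_cancel₀ h2I (by linear_combination -e032)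
  · exact mul_left_cancel₀ h2I (by linear_combination e031)

/-- the coefficient relations satisfied by any derivation of `𝔤`. -/
theorem derivation_coefficient_relations (ξ0 ξ3 : ℂ) (hξ0 : ξ0 ≠ 0) (hξ3 : ξ3 ≠ 0)
    {L : Type*} [LieRing L] [LieAlgebra ℂ L]
    (b : Module.Basis (Fin 4) ℂ L)
    (h10 : ⁅b 1, b 0⁆ = (-(2 * I * ξ0)) • b 2)
    (h13 : ⁅b 1, b 3⁆ = (-(2 * I * ξ3)) • b 2)
    (h20 : ⁅b 2, b 0⁆ = (2 * I * ξ0) • b 1)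
    (h23 : ⁅b 2, b 3⁆ = (2 * I * ξ3) • b 1)
    (h03 : ⁅b 0, b 3⁆ = 0)
    (h12 : ⁅b 1, b 2⁆ = 0)
    (D : L →ₗ[ℂ] L)
    (hD : ∀ x y : L, D ⁅x, y⁆ = ⁅D x, y⁆ + ⁅x, D y⁆)
    (N : Fin 4 → Fin 4 → ℂ)
    (hN : ∀ ν : Fin 4, D (b ν) = ∑ σ : Fin 4, N σ ν • b σ) :
    N 0 1 = 0 ∧ N 3 1 = 0 ∧ N 0 2 = 0 ∧ N 3 2 = 0 ∧
    N 1 1 = N 2 2 ∧ N 2 1 = -N 1 2 ∧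
    N 3 0 = -(ξ0 / ξ3) * N 0 0 ∧ N 3 3 = -(ξ0 / ξ3) * N 0 3 ∧
    N 1 3 = ξ3 / ξ0 * N 1 0 ∧ N 2 3 = ξ3 / ξ0 * N 2 0 := by
  obtain ⟨hN01, hN31, hN02, hN32, hN11, hN21, hN30, hN33, hN13, hN23⟩ :=
    (b.isDerivationMatrix _ (lie_basis_eq_gStructConst ξ0 ξ3 b h10 h13 h20 h23 h03 h12)
      D hD N hN).gStructConst_relations hξ0
  refine ⟨hN01, hN31, hN02, hN32, hN11, hN21, ?_, ?_, ?_, ?_⟩ <;> field_simp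
  · linear_combination hN30
  · linear_combination hN33
  · linear_combination hN13
  · linear_combination hN23
end
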